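/- Max Shift is consistent: for every mode x⋆ of f and every point x₀ in the basin of attraction of x⋆, there exists ε₀ > 0 such that for every 0 < ε ≤ ε₀, every Max Shift sequence with parameter ε started at x₀ is eventually constant equal to x⋆. -/

import Mathlib

open Metric Set Filter MeasureTheory Topology
open scoped Topology RealInnerProductSpace

abbrev Euc (d : ℕ) := EuclideanSpace ℝ (Fin d)

/-- The Hessian of `f`, as the derivative of the gradient field. -/
noncomputable def hess {d : ℕ} (f : Euc d → ℝ) (x : Euc d) : Euc d →L[ℝ] Euc d :=
  fderiv ℝ (gradient f) x

/-- The standing assumptions on the density `f`: nonnegative, integrable, vanishing at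
infinity, twice differentiable with bounded and uniformly continuous zeroth, first and
second derivatives, and Morse (nonsingular Hessian at every critical point). -/
def IsNiceDensity {d : ℕ} (f : Euc d → ℝ) : Prop :=
  (∀ x, 0 ≤ f x) ∧
  Integrable f volume ∧
  Tendsto f (cocompact (Euc d)) (𝓝 0) ∧
  Differentiable ℝ f ∧
  Differentiable ℝ (gradient f) ∧
  (∃ M, ∀ x, |f x| ≤ M) ∧
  (∃ M, ∀ x, ‖gradient f x‖ ≤ M) ∧
  (∃ M, ∀ x, ‖hess f x‖ ≤ M) ∧
  UniformContinuous f ∧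
  UniformContinuous (gradient f) ∧
  UniformContinuous (hess f) ∧
  (∀ x, gradient f x = 0 → Function.Bijective (hess f x))

/-- `γ` is the gradient ascent curve of `f` starting at `x`, defined on `[0, ∞)`. -/
def IsGradFlow {d : ℕ} (f : Euc d → ℝ) (x : Euc d) (γ : ℝ → Euc d) : Prop :=
  γ 0 = x ∧ ∀ t ∈ Ici (0:ℝ), HasDerivWithinAt γ (gradient f (γ t)) (Ici 0) t

/-- A Max Shift sequence with parameter `ε` started at `x₀`: each point maximizes `f` over the
closed ball of radius `ε` around the previous point, and the sequence becomes constant as soon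
as the density value stops strictly increasing. -/
def IsMaxShiftSeq {d : ℕ} (f : Euc d → ℝ) (ε : ℝ) (x₀ : Euc d) (x : ℕ → Euc d) : Prop :=
  x 0 = x₀ ∧ ∀ k : ℕ,
    x (k+1) ∈ closedBall (x k) ε ∧
    (∀ y ∈ closedBall (x k) ε, f y ≤ f (x (k+1))) ∧
    (f (x (k+1)) = f (x k) → ∀ m, k + 1 ≤ m → x m = x (k+1))

/-!
Near the mode the Hessian is negative definite, so `f` is strongly concave on a ball `B` around
`x⋆`. Once a Max Shift iterate lies in a small superlevel neighbourhood of `x⋆`, the sequence stays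
in `B`; concavity along the segment towards `x⋆` makes every step gain at least `c ε²` until an
iterate is within `ε` of `x⋆`, and the next step then lands on `x⋆`, the unique maximiser of `f`
on `B`.

Away from critical points a Max Shift step is, up to `O(ε^{3/2})`, a step of length `ε` along the
normalised gradient, i.e. a step of duration `ε / ‖∇ f‖` of the gradient flow. By uniqueness of
solutions the flow from `x₀ ≠ x⋆` never meets a critical point, so on `[0, T]` its speed is
bounded below, and a discrete Grönwall argument keeps the iterates within `O(√ε)` of the flow.
For small `ε` they therefore reach the neighbourhood of `x⋆` that the flow enters by time `T`.
-/

open scoped Gradient NNReal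

theorem norm_inv_smul_sub_inv_smul_le {F : Type*} [NormedAddCommGroup F] [NormedSpace ℝ F]
    {a b : F} (ha : a ≠ 0) (hb : b ≠ 0) :
    ‖‖a‖⁻¹ • a - ‖b‖⁻¹ • b‖ ≤ 2 * ‖a - b‖ / ‖b‖ := by
  have ha' : 0 < ‖a‖ := norm_pos_iff.2 ha
  have hb' : 0 < ‖b‖ := norm_pos_iff.2 hb
  calc ‖‖a‖⁻¹ • a - ‖b‖⁻¹ • b‖ = ‖(‖a‖⁻¹ - ‖b‖⁻¹) • a + ‖b‖⁻¹ • (a - b)‖ := by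
        congr 1
        module
    _ ≤ |‖a‖⁻¹ - ‖b‖⁻¹| * ‖a‖ + ‖b‖⁻¹ * ‖a - b‖ := by
        refine (norm_add_le _ _).trans_eq ?_
        rw [norm_smul, norm_smul, Real.norm_eq_abs, Real.norm_of_nonneg (by positivity)]
    _ = |‖b‖ - ‖a‖| / ‖b‖ + ‖a - b‖ / ‖b‖ := by
        rw [inv_sub_inv ha'.ne' hb'.ne', abs_div, abs_of_pos (mul_pos ha' hb')]
        field_simp
    _ ≤ ‖a - b‖ / ‖b‖ + ‖a - b‖ / ‖b‖ := by
        gcongr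
        rw [norm_sub_rev a b]
        exact abs_norm_sub_norm_le b a
    _ = 2 * ‖a - b‖ / ‖b‖ := by ring

section GradientCalculus

variable {E : Type*} [NormedAddCommGroup E] [InnerProductSpace ℝ E] [CompleteSpace E]
  {f : E → ℝ}

theorem hasDerivAt_comp_add_smul {x v : E} {t : ℝ} (hf : DifferentiableAt ℝ f (x + t • v)) :
    HasDerivAt (fun s : ℝ => f (x + s • v)) ⟪∇ f (x + t • v), v⟫ t := by
  have hline : HasDerivAt (fun s : ℝ => x + s • v) v t := by
    simpa using ((hasDerivAt_id t).smul_const v).const_add x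
  exact hf.hasGradientAt.hasFDerivAt.comp_hasDerivAt t hline

theorem IsLocalMax.gradient_eq_zero {x : E} (h : IsLocalMax f x) : ∇ f x = 0 := by
  rw [gradient, h.fderiv_eq_zero, map_zero]

theorem abs_sub_sub_inner_gradient_le {L : ℝ≥0} (hf : Differentiable ℝ f)
    (hlip : LipschitzWith L (∇ f)) (x y : E) :
    |f y - f x - ⟪∇ f x, y - x⟫| ≤ L * ‖y - x‖ ^ 2 := by
  set v := y - x
  have hderiv (t : ℝ) : HasDerivAt (fun s : ℝ => f (x + s • v) - s * ⟪∇ f x, v⟫)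
      ⟪∇ f (x + t • v) - ∇ f x, v⟫ t :=
    ((hasDerivAt_comp_add_smul (hf _)).sub (hasDerivAt_mul_const _)).congr_deriv
      (inner_sub_left _ _ _).symm
  have hbound : ∀ t ∈ Ico (0 : ℝ) 1, ‖⟪∇ f (x + t • v) - ∇ f x, v⟫‖ ≤ L * ‖v‖ ^ 2 := by
    intro t ht
    calc ‖⟪∇ f (x + t • v) - ∇ f x, v⟫‖
        ≤ ‖∇ f (x + t • v) - ∇ f x‖ * ‖v‖ := norm_inner_le_norm _ _
      _ ≤ L * ‖t • v‖ * ‖v‖ := by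
          gcongr
          simpa [dist_eq_norm] using hlip.dist_le_mul (x + t • v) x
      _ ≤ L * ‖v‖ * ‖v‖ := by
          gcongr
          rw [norm_smul, Real.norm_of_nonneg ht.1]
          exact mul_le_of_le_one_left (norm_nonneg _) ht.2.le
      _ = L * ‖v‖ ^ 2 := by ring
  have := norm_image_sub_le_of_norm_deriv_le_segment_01'
    (fun t _ => (hderiv t).hasDerivWithinAt) hbound
  simpa [v, Real.norm_eq_abs, sub_right_comm] using this

theorem norm_sub_sub_div_smul_gradient_sq_le {L : ℝ≥0} (hf : Differentiable ℝ f)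
    (hlip : LipschitzWith L (∇ f)) {ε : ℝ} (hε : 0 ≤ ε) {x y : E} (hx : ∇ f x ≠ 0)
    (hy : y ∈ closedBall x ε) (hmax : IsMaxOn f (closedBall x ε) y) :
    ‖y - x - (ε / ‖∇ f x‖) • ∇ f x‖ ^ 2 ≤ 4 * L * ε ^ 3 / ‖∇ f x‖ := by
  set g := ∇ f x
  have hg : 0 < ‖g‖ := norm_pos_iff.2 hx
  set p := x + (ε / ‖g‖) • g
  have hpx : p - x = (ε / ‖g‖) • g := add_sub_cancel_left _ _
  have hnorm : ‖(ε / ‖g‖) • g‖ = ε := by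
    rw [norm_smul, Real.norm_of_nonneg (by positivity), div_mul_cancel₀ _ hg.ne']
  have hinner : ⟪g, (ε / ‖g‖) • g⟫ = ε * ‖g‖ := by
    rw [real_inner_smul_right, real_inner_self_eq_norm_sq]
    field_simp
  have hyx : ‖y - x‖ ≤ ε := by rwa [← dist_eq_norm]
  have hp : p ∈ closedBall x ε := by rw [mem_closedBall, dist_eq_norm, hpx, hnorm]
  -- the competitor `p` forces the step `y - x` to point almost along `g`
  have hgain : ε * ‖g‖ - 2 * L * ε ^ 2 ≤ ⟪g, y - x⟫ := by
    have hp' := abs_sub_sub_inner_gradient_le hf hlip x p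
    have hy' := abs_sub_sub_inner_gradient_le hf hlip x y
    rw [hpx, hinner, hnorm] at hp'
    have : L * ‖y - x‖ ^ 2 ≤ L * ε ^ 2 := by gcongr
    have := isMaxOn_iff.1 hmax p hp
    linarith [(abs_le.1 hp').1, (abs_le.1 hy').2]
  have hexpand : ‖y - x - (ε / ‖g‖) • g‖ ^ 2
      = ‖y - x‖ ^ 2 - 2 * (ε / ‖g‖) * ⟪g, y - x⟫ + ε ^ 2 := by
    rw [norm_sub_sq_real, hnorm, real_inner_smul_right, real_inner_comm]
    ring
  have hscaled : 2 * (ε / ‖g‖) * (ε * ‖g‖ - 2 * L * ε ^ 2)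
      ≤ 2 * (ε / ‖g‖) * ⟪g, y - x⟫ := by gcongr
  have : 2 * (ε / ‖g‖) * (ε * ‖g‖ - 2 * L * ε ^ 2) = 2 * ε ^ 2 - 4 * L * ε ^ 3 / ‖g‖ := by
    field_simp
    ring
  have : ‖y - x‖ ^ 2 ≤ ε ^ 2 := by gcongr
  linarith

theorem norm_sub_sub_div_smul_gradient_le {L : ℝ≥0} (hf : Differentiable ℝ f)
    (hlip : LipschitzWith L (∇ f)) {m ε : ℝ} (hm : 0 < m) (hε : 0 < ε) {x y z : E}
    (hz : m ≤ ‖∇ f z‖) (hxz : L * ‖x - z‖ ≤ m / 2) (hy : y ∈ closedBall x ε)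
    (hmax : IsMaxOn f (closedBall x ε) y) :
    ‖y - x - (ε / ‖∇ f z‖) • ∇ f z‖ ≤ 2 * L / m * ε * ‖x - z‖ + √(8 * L / m) * (ε * √ε) := by
  have hz0 : ∇ f z ≠ 0 := norm_pos_iff.1 (hm.trans_le hz)
  have hlipx : ‖∇ f x - ∇ f z‖ ≤ L * ‖x - z‖ := by
    simpa [dist_eq_norm] using hlip.dist_le_mul x z
  have hx : m / 2 ≤ ‖∇ f x‖ := by
    linarith [norm_sub_norm_le (∇ f z) (∇ f x), norm_sub_rev (∇ f z) (∇ f x)]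
  have hx0 : ∇ f x ≠ 0 := norm_pos_iff.1 (by linarith)
  have hstep : ‖y - x - (ε / ‖∇ f x‖) • ∇ f x‖ ≤ √(8 * L / m) * (ε * √ε) := by
    refine (sq_le_sq₀ (norm_nonneg _) (by positivity)).1 ?_
    calc ‖y - x - (ε / ‖∇ f x‖) • ∇ f x‖ ^ 2 ≤ 4 * L * ε ^ 3 / ‖∇ f x‖ :=
          norm_sub_sub_div_smul_gradient_sq_le hf hlip hε.le hx0 hy hmax
      _ ≤ 4 * L * ε ^ 3 / (m / 2) := by gcongr
      _ = (√(8 * L / m) * (ε * √ε)) ^ 2 := by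
          rw [mul_pow, mul_pow, Real.sq_sqrt (by positivity), Real.sq_sqrt hε.le]
          field_simp
          ring
  have hdir : ‖(ε / ‖∇ f x‖) • ∇ f x - (ε / ‖∇ f z‖) • ∇ f z‖ ≤ 2 * L / m * ε * ‖x - z‖ := by
    rw [div_eq_mul_inv, div_eq_mul_inv ε, mul_smul, mul_smul, ← smul_sub, norm_smul,
      Real.norm_of_nonneg hε.le]
    calc ε * ‖‖∇ f x‖⁻¹ • ∇ f x - ‖∇ f z‖⁻¹ • ∇ f z‖
        ≤ ε * (2 * ‖∇ f x - ∇ f z‖ / ‖∇ f z‖) := by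
          gcongr
          exact norm_inv_smul_sub_inv_smul_le hx0 hz0
      _ ≤ ε * (2 * (L * ‖x - z‖) / m) := by gcongr
      _ = 2 * L / m * ε * ‖x - z‖ := by ring
  calc ‖y - x - (ε / ‖∇ f z‖) • ∇ f z‖
      = ‖(y - x - (ε / ‖∇ f x‖) • ∇ f x)
          + ((ε / ‖∇ f x‖) • ∇ f x - (ε / ‖∇ f z‖) • ∇ f z)‖ := by congr 1; abel
    _ ≤ 2 * L / m * ε * ‖x - z‖ + √(8 * L / m) * (ε * √ε) := by
        linarith [norm_add_le (y - x - (ε / ‖∇ f x‖) • ∇ f x)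
          ((ε / ‖∇ f x‖) • ∇ f x - (ε / ‖∇ f z‖) • ∇ f z)]

end GradientCalculus

section InnerProductSpace

variable {E : Type*} [NormedAddCommGroup E] [InnerProductSpace ℝ E]

theorem hasDerivAt_inner_comp_add_smul {g : E → E} {g' : E →L[ℝ] E} {x v : E} {t : ℝ}
    (hg : HasFDerivAt g g' (x + t • v)) :
    HasDerivAt (fun s : ℝ => ⟪g (x + s • v), v⟫) ⟪g' v, v⟫ t := by
  have hline : HasDerivAt (fun s : ℝ => x + s • v) v t := by
    simpa using ((hasDerivAt_id t).smul_const v).const_add x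
  simpa using (hg.comp_hasDerivAt t hline).inner ℝ (hasDerivAt_const t v)

theorem Convex.inner_sub_le_of_inner_fderiv_le {s : Set E} {m : ℝ} {g : E → E}
    {g' : E → E →L[ℝ] E} (hs : Convex ℝ s) (hg : ∀ z ∈ s, HasFDerivAt g (g' z) z)
    (h : ∀ z ∈ s, ∀ v, ⟪g' z v, v⟫ ≤ -m * ‖v‖ ^ 2) {z w : E} (hz : z ∈ s) (hw : w ∈ s) :
    ⟪g z - g w, z - w⟫ ≤ -m * ‖z - w‖ ^ 2 := by
  set u := z - w
  have hmem (t : ℝ) (ht : t ∈ Icc (0 : ℝ) 1) : w + t • u ∈ s := hs.add_smul_sub_mem hw hz ht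
  have hderiv (t : ℝ) (ht : t ∈ Icc (0 : ℝ) 1) :
      HasDerivAt (fun s : ℝ => ⟪g (w + s • u), u⟫) ⟪g' (w + t • u) u, u⟫ t :=
    hasDerivAt_inner_comp_add_smul (hg _ (hmem t ht))
  have := (convex_Icc (0 : ℝ) 1).image_sub_le_mul_sub_of_deriv_le
    (fun t ht => (hderiv t ht).continuousAt.continuousWithinAt)
    (fun t ht => (hderiv t (interior_subset ht)).differentiableAt.differentiableWithinAt)
    (fun t ht => (hderiv t (interior_subset ht)).deriv ▸ h _ (hmem t (interior_subset ht)) u)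
    0 (left_mem_Icc.2 zero_le_one) 1 (right_mem_Icc.2 zero_le_one) zero_le_one
  simpa [u, inner_sub_left] using this

theorem LinearMap.IsSymmetric.apply_eq_zero_of_inner_apply_self_eq_zero {T : E →ₗ[ℝ] E}
    (hT : T.IsSymmetric) (hneg : ∀ v, ⟪T v, v⟫ ≤ 0) {v : E} (hv : ⟪T v, v⟫ = 0) : T v = 0 := by
  set b := ⟪T v, T v⟫
  set q := ⟪T (T v), T v⟫
  have hq : q ≤ 0 := hneg _
  -- along `v + t • T v` the form is `2 t b + t² q`, positive at `t = b / (1 - q)` unless `b = 0`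
  have hquad (t : ℝ) : ⟪T (v + t • T v), v + t • T v⟫ = 2 * t * b + t ^ 2 * q := by
    simp only [map_add, map_smul, inner_add_left, inner_add_right, real_inner_smul_left,
      real_inner_smul_right, hv, b, q, hT (T v) v, real_inner_comm (T v)]
    ring
  have key := hneg (v + (b / (1 - q)) • T v)
  rw [hquad] at key
  have h1q : 0 < 1 - q := by linarith
  have : b ^ 2 * (2 - q) ≤ 0 := by
    have : b ^ 2 * (2 - q) = (1 - q) ^ 2 * (2 * (b / (1 - q)) * b + (b / (1 - q)) ^ 2 * q) := by
      field_simp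
      ring
    rw [this]
    exact mul_nonpos_of_nonneg_of_nonpos (sq_nonneg _) key
  have hb : b = 0 := by nlinarith [sq_nonneg b]
  exact inner_self_eq_zero.1 hb

theorem ContinuousLinearMap.exists_inner_apply_self_le_neg_mul_sq [FiniteDimensional ℝ E]
    (T : E →L[ℝ] E) (hT : (T : E →ₗ[ℝ] E).IsSymmetric) (hneg : ∀ v, ⟪T v, v⟫ ≤ 0)
    (hinj : Function.Injective T) : ∃ a > 0, ∀ v, ⟪T v, v⟫ ≤ -a * ‖v‖ ^ 2 := by
  rcases subsingleton_or_nontrivial E with hE | hE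
  · exact ⟨1, one_pos, fun v => by simp [Subsingleton.elim v 0]⟩
  obtain ⟨v₀, hv₀, hmax⟩ := (isCompact_sphere (0 : E) 1).exists_isMaxOn
    (NormedSpace.sphere_nonempty.2 zero_le_one)
    (T.continuous.inner (𝕜 := ℝ) continuous_id).continuousOn
  have hv₀1 : ‖v₀‖ = 1 := by simpa using hv₀
  have hneg₀ : ⟪T v₀, v₀⟫ < 0 := by
    refine (hneg v₀).lt_of_ne fun h => ?_
    have : v₀ = 0 := hinj (by simpa using hT.apply_eq_zero_of_inner_apply_self_eq_zero hneg h)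
    simp [this] at hv₀1
  refine ⟨-⟪T v₀, v₀⟫, by linarith, fun v => ?_⟩
  rcases eq_or_ne v 0 with rfl | hv
  · simp
  have hnv : 0 < ‖v‖ := norm_pos_iff.2 hv
  have hunit : ‖v‖⁻¹ • v ∈ sphere (0 : E) 1 := by
    simp [norm_smul, hnv.ne']
  have hscale : ⟪T v, v⟫ = ‖v‖ ^ 2 * ⟪T (‖v‖⁻¹ • v), ‖v‖⁻¹ • v⟫ := by
    rw [map_smul, real_inner_smul_left, real_inner_smul_right]
    field_simp
  rw [hscale]
  have : ⟪T (‖v‖⁻¹ • v), ‖v‖⁻¹ • v⟫ ≤ ⟪T v₀, v₀⟫ := isMaxOn_iff.1 hmax _ hunit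
  nlinarith [sq_nonneg ‖v‖]

end InnerProductSpace

section Concavity

variable {E : Type*} [NormedAddCommGroup E] [InnerProductSpace ℝ E] {f : E → ℝ} {s : Set E}
  {m : ℝ}

theorem strongConcaveOn_of_inner_gradient_sub_le [CompleteSpace E] (hf : Differentiable ℝ f)
    (hs : Convex ℝ s)
    (h : ∀ x ∈ s, ∀ y ∈ s, ⟪∇ f x - ∇ f y, x - y⟫ ≤ -m * ‖x - y‖ ^ 2) :
    StrongConcaveOn s m f := by
  refine ⟨hs, fun x hx y hy a b ha hb hab => ?_⟩
  set u := y - x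
  set φ : ℝ → ℝ := fun t => f (x + t • u) + m / 2 * t ^ 2 * ‖u‖ ^ 2
  have hderiv (t : ℝ) : HasDerivAt φ (⟪∇ f (x + t • u), u⟫ + m * t * ‖u‖ ^ 2) t := by
    have hsq : HasDerivAt (fun t : ℝ => m / 2 * t ^ 2 * ‖u‖ ^ 2) (m * t * ‖u‖ ^ 2) t :=
      (((hasDerivAt_pow 2 t).const_mul (m / 2)).mul_const (‖u‖ ^ 2)).congr_deriv (by ring)
    exact (hasDerivAt_comp_add_smul (hf _)).add hsq
  have hanti : AntitoneOn (deriv φ) (interior (Icc 0 1)) := by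
    intro t₁ ht₁ t₂ ht₂ h12
    rw [interior_Icc] at ht₁ ht₂
    rw [(hderiv t₁).deriv, (hderiv t₂).deriv]
    have hmem (t : ℝ) (ht : t ∈ Ioo (0 : ℝ) 1) : x + t • u ∈ s :=
      hs.add_smul_sub_mem hx hy (Ioo_subset_Icc_self ht)
    have hmono := h _ (hmem t₂ ht₂) _ (hmem t₁ ht₁)
    rw [add_sub_add_left_eq_sub, ← sub_smul, real_inner_smul_right, norm_smul,
      Real.norm_of_nonneg (sub_nonneg.2 h12), inner_sub_left] at hmono
    rcases h12.eq_or_lt with rfl | hlt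
    · rfl
    · have : (t₂ - t₁) * (⟪∇ f (x + t₂ • u), u⟫ - ⟪∇ f (x + t₁ • u), u⟫)
          ≤ (t₂ - t₁) * (-m * (t₂ - t₁) * ‖u‖ ^ 2) := by linarith
      have := le_of_mul_le_mul_left this (sub_pos.2 hlt)
      linarith
  have hconc : ConcaveOn ℝ (Icc 0 1) φ :=
    hanti.concaveOn_of_deriv (convex_Icc 0 1)
      (HasDerivAt.continuousOn fun t _ => hderiv t)
      fun t _ => (hderiv t).differentiableAt.differentiableWithinAt
  have key := hconc.2 (left_mem_Icc.2 zero_le_one) (right_mem_Icc.2 zero_le_one) ha hb hab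
  have hcomb : x + b • u = a • x + b • y := by
    rw [eq_sub_of_add_eq hab]
    simp only [u, smul_sub, sub_smul, one_smul]
    abel
  have hxu : x + u = y := add_sub_cancel x y
  simp only [smul_eq_mul, mul_zero, mul_one, zero_add, φ, zero_smul, add_zero, one_smul,
    hcomb, hxu] at key
  simp only [smul_eq_mul]
  rw [norm_sub_rev x y]
  rw [eq_sub_of_add_eq hab] at key ⊢
  linarith

theorem StrongConcaveOn.le_sub_mul_sq_of_isLocalMax (hf : StrongConcaveOn s m f) (hm : 0 ≤ m)
    {x₀ y : E} (hx₀ : x₀ ∈ s) (hmax : IsLocalMax f x₀) (hy : y ∈ s) :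
    f y ≤ f x₀ - m / 4 * ‖y - x₀‖ ^ 2 := by
  have hmaxOn : IsMaxOn f s x₀ :=
    IsMaxOn.of_isLocalMaxOn_of_concaveOn hx₀ (hmax.on s) (hf.concaveOn fun r => by positivity)
  have hhalf : (0 : ℝ) ≤ 1 / 2 := by norm_num
  have hmid := hf.2 hy hx₀ hhalf hhalf (by norm_num)
  have := isMaxOn_iff.1 hmaxOn _ (hf.1 hy hx₀ hhalf hhalf (by norm_num))
  simp only [smul_eq_mul] at hmid
  linarith

end Concavity

section Capture

variable {E : Type*} [NormedAddCommGroup E] {f : E → ℝ} {xs : E} {r c : ℝ}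

theorem norm_sub_le_of_sub_mul_sq_le (hc : 0 < c)
    (hquad : ∀ y ∈ closedBall xs r, f y ≤ f xs - c * ‖y - xs‖ ^ 2) {y : E}
    (hy : y ∈ closedBall xs r) {ρ : ℝ} (hρ : 0 ≤ ρ) (h : f xs - c * ρ ^ 2 ≤ f y) :
    ‖y - xs‖ ≤ ρ := by
  have := hquad y hy
  have : ‖y - xs‖ ^ 2 ≤ ρ ^ 2 := le_of_mul_le_mul_left (by linarith) hc
  exact (sq_le_sq₀ (norm_nonneg _) hρ).1 this

theorem add_mul_sq_le_of_isMaxOn_closedBall [NormedSpace ℝ E] (hc : 0 ≤ c)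
    (hconc : ConcaveOn ℝ (closedBall xs r) f)
    (hquad : ∀ y ∈ closedBall xs r, f y ≤ f xs - c * ‖y - xs‖ ^ 2) {ε : ℝ} (hε : 0 < ε)
    {x y : E} (hx : x ∈ closedBall xs r) (hεx : ε ≤ ‖x - xs‖)
    (hmax : IsMaxOn f (closedBall x ε) y) : f x + c * ε ^ 2 ≤ f y := by
  set D := ‖x - xs‖
  have hD : 0 < D := hε.trans_le hεx
  set θ := ε / D
  have hθ : θ ≤ 1 := (div_le_one hD).2 hεx
  have hθ0 : 0 ≤ θ := by positivity
  have hxs : xs ∈ closedBall xs r := mem_closedBall_self (dist_nonneg.trans hx)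
  have hp : (1 - θ) • x + θ • xs ∈ closedBall x ε := by
    rw [mem_closedBall, dist_eq_norm,
      show (1 - θ) • x + θ • xs - x = θ • (xs - x) by module, norm_smul,
      Real.norm_of_nonneg hθ0, norm_sub_rev, div_mul_cancel₀ _ hD.ne']
  have hconcave := hconc.2 hx hxs (sub_nonneg.2 hθ) hθ0 (by ring)
  have hfp := isMaxOn_iff.1 hmax _ hp
  have hgap : c * D ^ 2 ≤ f xs - f x := by linarith [hquad x hx]
  have : c * ε ^ 2 ≤ θ * (c * D ^ 2) := by
    have : θ * (c * D ^ 2) = c * ε * D := by simp only [θ]; field_simp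
    rw [this, sq, ← mul_assoc]
    gcongr
  simp only [smul_eq_mul] at hconcave
  nlinarith

end Capture

section Hessian

variable {d : ℕ} {f : Euc d → ℝ}

theorem lipschitzWith_gradient_of_norm_hess_le (hgrad : Differentiable ℝ (∇ f)) {M : ℝ}
    (hM : ∀ x, ‖hess f x‖ ≤ M) : LipschitzWith (Real.toNNReal M) (∇ f) :=
  lipschitzWith_of_nnnorm_fderiv_le hgrad fun x => by
    rw [← NNReal.coe_le_coe, coe_nnnorm]
    exact (hM x).trans (Real.le_coe_toNNReal M)

theorem hess_isSymmetric (hdiff : Differentiable ℝ f) (hgrad : Differentiable ℝ (∇ f))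
    (x : Euc d) : (hess f x : Euc d →ₗ[ℝ] Euc d).IsSymmetric := by
  set ι := (InnerProductSpace.toDual ℝ (Euc d)).toContinuousLinearEquiv.toContinuousLinearMap
  have hf' (y : Euc d) : HasFDerivAt f (ι (∇ f y)) y := (hdiff y).hasGradientAt.hasFDerivAt
  have hx : HasFDerivAt (fun y => ι (∇ f y)) (ι.comp (hess f x)) x :=
    ι.hasFDerivAt.comp x (hgrad x).hasFDerivAt
  intro v w
  simpa [ι, InnerProductSpace.toDual_apply_apply, real_inner_comm]
    using second_derivative_symmetric hf' hx v w

theorem IsLocalMax.inner_hess_self_nonpos {x : Euc d} (hmax : IsLocalMax f x)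
    (hdiff : Differentiable ℝ f) (hgrad : Differentiable ℝ (∇ f)) (v : Euc d) :
    ⟪hess f x v, v⟫ ≤ 0 := by
  set φ : ℝ → ℝ := fun s => f (x + s • v)
  have hφ' : deriv φ = fun s => ⟪∇ f (x + s • v), v⟫ :=
    funext fun s => (hasDerivAt_comp_add_smul (hdiff _)).deriv
  have hφ'' : deriv (deriv φ) 0 = ⟪hess f x v, v⟫ := by
    rw [hφ']
    have h := hasDerivAt_inner_comp_add_smul (x := x) (v := v) (t := 0) (g' := hess f x)
      (by rw [zero_smul, add_zero]; exact (hgrad x).hasFDerivAt)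
    simpa using h.deriv
  by_contra! hpos
  -- a critical point with positive second derivative is a local minimum of `φ`; being also
  -- a local maximum, `φ` is locally constant, so its second derivative vanishes
  have hmin : IsLocalMin φ 0 := isLocalMin_of_deriv_deriv_pos (hφ'' ▸ hpos)
    (by simp [hφ', hmax.gradient_eq_zero]) (hdiff.continuous.comp (by fun_prop)).continuousAt
  have hmaxφ : IsLocalMax φ 0 :=
    IsLocalMax.comp_continuous (by simpa using hmax) (by fun_prop)
  have hconst : φ =ᶠ[𝓝 0] fun _ => φ 0 := by
    filter_upwards [hmin, hmaxφ] with s h₁ h₂ using le_antisymm h₂ h₁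
  have : deriv (deriv φ) 0 = 0 := by
    rw [hconst.deriv.deriv_eq]
    simp
  linarith

theorem IsLocalMax.exists_strongConcaveOn_closedBall {x : Euc d} (hmax : IsLocalMax f x)
    (hdiff : Differentiable ℝ f) (hgrad : Differentiable ℝ (∇ f))
    (hcont : ContinuousAt (hess f) x) (hinj : Function.Injective (hess f x)) :
    ∃ a > 0, ∃ r > 0, StrongConcaveOn (closedBall x r) a f := by
  obtain ⟨c, hc, hneg⟩ := (hess f x).exists_inner_apply_self_le_neg_mul_sq
    (hess_isSymmetric hdiff hgrad x) (hmax.inner_hess_self_nonpos hdiff hgrad) hinj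
  obtain ⟨δ, hδ, hclose⟩ := Metric.continuousAt_iff.1 hcont (c / 2) (by positivity)
  have hnegBall : ∀ z ∈ closedBall x (δ / 2), ∀ v, ⟪hess f z v, v⟫ ≤ -(c / 2) * ‖v‖ ^ 2 := by
    intro z hz v
    have hzx : ‖hess f z - hess f x‖ ≤ c / 2 := by
      rw [← dist_eq_norm]
      exact (hclose ((mem_closedBall.1 hz).trans_lt (half_lt_self hδ))).le
    have : ⟪(hess f z - hess f x) v, v⟫ ≤ c / 2 * ‖v‖ ^ 2 :=
      calc ⟪(hess f z - hess f x) v, v⟫ ≤ ‖hess f z - hess f x‖ * ‖v‖ * ‖v‖ :=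
            (real_inner_le_norm _ _).trans (by gcongr; exact (hess f z - hess f x).le_opNorm v)
        _ ≤ c / 2 * ‖v‖ ^ 2 := by rw [mul_assoc, ← sq]; gcongr
    rw [sub_apply, inner_sub_left] at this
    linarith [hneg v]
  refine ⟨c / 2, by positivity, δ / 2, by positivity, ?_⟩
  exact strongConcaveOn_of_inner_gradient_sub_le hdiff (convex_closedBall x _)
    fun z hz w hw => (convex_closedBall x _).inner_sub_le_of_inner_fderiv_le
      (fun y _ => (hgrad y).hasFDerivAt) hnegBall hz hw

end Hessian

namespace IsMaxShiftSeq

variable {d : ℕ} {f : Euc d → ℝ} {ε : ℝ} {x₀ : Euc d} {x : ℕ → Euc d}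

theorem dist_succ_le (hx : IsMaxShiftSeq f ε x₀ x) (k : ℕ) : dist (x (k + 1)) (x k) ≤ ε :=
  (hx.2 k).1

theorem isMaxOn (hx : IsMaxShiftSeq f ε x₀ x) (k : ℕ) :
    IsMaxOn f (closedBall (x k) ε) (x (k + 1)) :=
  isMaxOn_iff.2 (hx.2 k).2.1

theorem monotone (hx : IsMaxShiftSeq f ε x₀ x) (hε : 0 ≤ ε) : Monotone (f ∘ x) :=
  monotone_nat_of_le_succ fun k => isMaxOn_iff.1 (hx.isMaxOn k) _ (mem_closedBall_self hε)

variable {xs : Euc d} {r c : ℝ} {K : ℕ}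

theorem forall_ge_mem_closedBall (hx : IsMaxShiftSeq f ε x₀ x) (hε : 0 ≤ ε) (hεr : ε ≤ r / 2)
    (hc : 0 < c) (hquad : ∀ y ∈ closedBall xs r, f y ≤ f xs - c * ‖y - xs‖ ^ 2)
    (hK : x K ∈ closedBall xs (r / 2)) (hfK : f xs - c * (r / 2) ^ 2 ≤ f (x K)) :
    ∀ n ≥ K, x n ∈ closedBall xs (r / 2) := by
  have hr : 0 ≤ r / 2 := dist_nonneg.trans hK
  intro n hn
  induction n, hn using Nat.le_induction with
  | base => exact hK
  | succ n hn ih =>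
    have hnr : x (n + 1) ∈ closedBall xs r :=
      calc dist (x (n + 1)) xs ≤ dist (x (n + 1)) (x n) + dist (x n) xs := dist_triangle _ _ _
        _ ≤ r := by linarith [hx.dist_succ_le n, mem_closedBall.1 ih]
    rw [mem_closedBall, dist_eq_norm]
    exact norm_sub_le_of_sub_mul_sq_le hc hquad hnr hr
      (hfK.trans (hx.monotone hε (hn.trans n.le_succ)))

theorem exists_forall_ge_eq (hx : IsMaxShiftSeq f ε x₀ x) (hε : 0 < ε) (hεr : ε ≤ r / 2)
    (hc : 0 < c) (hconc : ConcaveOn ℝ (closedBall xs r) f)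
    (hquad : ∀ y ∈ closedBall xs r, f y ≤ f xs - c * ‖y - xs‖ ^ 2)
    (hK : x K ∈ closedBall xs (r / 2)) (hfK : f xs - c * (r / 2) ^ 2 ≤ f (x K)) :
    ∃ N, ∀ n ≥ N, x n = xs := by
  have hball (n : ℕ) (hn : K ≤ n) : x n ∈ closedBall xs r :=
    closedBall_subset_closedBall (by linarith [dist_nonneg.trans hK])
      (hx.forall_ge_mem_closedBall hε.le hεr hc hquad hK hfK n hn)
  -- away from `xs` every step gains at least `c ε²`, which `f ≤ f xs` allows only finitely often
  obtain ⟨k, hk, hnear⟩ : ∃ k ≥ K, ‖x k - xs‖ < ε := by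
    by_contra! hfar
    have hgrow (n : ℕ) : f (x K) + n * (c * ε ^ 2) ≤ f (x (K + n)) := by
      induction n with
      | zero => simp
      | succ n ih =>
        have := add_mul_sq_le_of_isMaxOn_closedBall hc.le hconc hquad hε
          (hball _ (K.le_add_right n)) (hfar _ (K.le_add_right n)) (hx.isMaxOn (K + n))
        rw [← add_assoc]
        push_cast
        linarith
    obtain ⟨n, hn⟩ := exists_nat_gt ((f xs - f (x K)) / (c * ε ^ 2))
    rw [div_lt_iff₀ (by positivity)] at hn
    have := hquad _ (hball _ (K.le_add_right n))
    nlinarith [hgrow n, sq_nonneg ‖x (K + n) - xs‖]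
  have hxs : f xs ≤ f (x (k + 1)) :=
    isMaxOn_iff.1 (hx.isMaxOn k) xs
      (by rw [mem_closedBall, dist_comm, dist_eq_norm]; exact hnear.le)
  refine ⟨k + 1, fun n hn => ?_⟩
  have : ‖x n - xs‖ ≤ 0 := norm_sub_le_of_sub_mul_sq_le hc hquad (hball n (by omega)) le_rfl
    (by simpa using hxs.trans (hx.monotone hε.le hn))
  simpa [sub_eq_zero] using this

end IsMaxShiftSeq

theorem IsLocalMax.exists_mem_nhds_eventually_maxShift_eq {d : ℕ} {f : Euc d → ℝ} {xs : Euc d}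
    (hmax : IsLocalMax f xs) (hdiff : Differentiable ℝ f) (hgrad : Differentiable ℝ (∇ f))
    (hcont : ContinuousAt (hess f) xs) (hinj : Function.Injective (hess f xs)) :
    ∃ U ∈ 𝓝 xs, ∀ᶠ ε in 𝓝[>] 0, ∀ x₀ x, IsMaxShiftSeq f ε x₀ x →
      ∀ K, x K ∈ U → ∃ N, ∀ n ≥ N, x n = xs := by
  obtain ⟨a, ha, r, hr, hconc⟩ := hmax.exists_strongConcaveOn_closedBall hdiff hgrad hcont hinj
  have hquad (y : Euc d) (hy : y ∈ closedBall xs r) : f y ≤ f xs - a / 4 * ‖y - xs‖ ^ 2 :=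
    hconc.le_sub_mul_sq_of_isLocalMax ha.le (mem_closedBall_self hr.le) hmax hy
  have hlevel : f ⁻¹' Ioi (f xs - a / 4 * (r / 2) ^ 2) ∈ 𝓝 xs :=
    hdiff.continuous.continuousAt.preimage_mem_nhds (Ioi_mem_nhds (sub_lt_self _ (by positivity)))
  refine ⟨ball xs (r / 2) ∩ f ⁻¹' Ioi (f xs - a / 4 * (r / 2) ^ 2),
    inter_mem (ball_mem_nhds _ (by positivity)) hlevel, ?_⟩
  filter_upwards [Ioc_mem_nhdsGT (half_pos hr)] with ε hε x₀ x hx K hK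
  exact hx.exists_forall_ge_eq hε.1 hε.2 (by positivity) (hconc.concaveOn fun _ => by positivity)
    hquad (ball_subset_closedBall hK.1) (le_of_lt hK.2)

theorem discrete_gronwall_bootstrap {e : ℕ → ℝ} {a b : ℝ} (ha : 0 ≤ a) (hb : 0 ≤ b)
    (h0 : e 0 = 0) {n : ℕ}
    (hstep : ∀ k < n, e k ≤ k * b * Real.exp (k * a) → e (k + 1) ≤ (1 + a) * e k + b) :
    ∀ k ≤ n, e k ≤ k * b * Real.exp (k * a) := by
  intro k hk
  induction k with
  | zero => simp [h0]
  | succ k ih =>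
    have hek := ih (by omega)
    calc e (k + 1) ≤ (1 + a) * e k + b := hstep k (by omega) hek
      _ ≤ (1 + a) * (k * b * Real.exp (k * a)) + b := by gcongr
      _ ≤ Real.exp a * (k * b * Real.exp (k * a)) + b * Real.exp ((k + 1) * a) := by
          gcongr
          · exact (Real.add_one_le_exp a).trans_eq' (add_comm _ _)
          · exact le_mul_of_one_le_right hb (Real.one_le_exp (by positivity))
      _ = ((k + 1 : ℕ) : ℝ) * b * Real.exp ((k + 1 : ℕ) * a) := by
          push_cast
          rw [add_mul (k : ℝ), one_mul, Real.exp_add]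
          ring

namespace IsGradFlow

variable {d : ℕ} {f : Euc d → ℝ} {x₀ : Euc d} {γ : ℝ → Euc d} {L : ℝ≥0} {G : ℝ}

theorem continuousOn (hγ : IsGradFlow f x₀ γ) : ContinuousOn γ (Ici 0) :=
  fun t ht => (hγ.2 t ht).continuousWithinAt

theorem hasDerivWithinAt_Icc (hγ : IsGradFlow f x₀ γ) {s t u : ℝ} (hs : 0 ≤ s)
    (hu : u ∈ Icc s t) : HasDerivWithinAt γ (∇ f (γ u)) (Icc s t) u :=
  (hγ.2 u (hs.trans hu.1)).mono fun _ hv => hs.trans hv.1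

theorem norm_sub_le_mul_sub (hγ : IsGradFlow f x₀ γ) (hG : ∀ z, ‖∇ f z‖ ≤ G) {s t : ℝ}
    (hs : 0 ≤ s) (hst : s ≤ t) : ‖γ t - γ s‖ ≤ G * (t - s) :=
  norm_image_sub_le_of_norm_deriv_le_segment' (fun _ hu => hγ.hasDerivWithinAt_Icc hs hu)
    (fun _ _ => hG _) t (right_mem_Icc.2 hst)

theorem norm_sub_sub_smul_le (hγ : IsGradFlow f x₀ γ) (hlip : LipschitzWith L (∇ f))
    (hG : ∀ z, ‖∇ f z‖ ≤ G) {t h : ℝ} (ht : 0 ≤ t) (hh : 0 ≤ h) :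
    ‖γ (t + h) - γ t - h • ∇ f (γ t)‖ ≤ L * G * h ^ 2 := by
  have hG0 : 0 ≤ G := (norm_nonneg _).trans (hG 0)
  set g := ∇ f (γ t)
  have hderiv (u : ℝ) (hu : u ∈ Icc t (t + h)) :
      HasDerivWithinAt (fun s => γ s - (s - t) • g) (∇ f (γ u) - g) (Icc t (t + h)) u := by
    have hline : HasDerivWithinAt (fun s : ℝ => (s - t) • g) g (Icc t (t + h)) u := by
      simpa using (((hasDerivAt_id u).sub_const t).smul_const g).hasDerivWithinAt
    exact (hγ.hasDerivWithinAt_Icc ht hu).sub hline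
  have hbound (u : ℝ) (hu : u ∈ Ico t (t + h)) : ‖∇ f (γ u) - g‖ ≤ L * G * h :=
    calc ‖∇ f (γ u) - g‖ ≤ L * ‖γ u - γ t‖ := by
          simpa [dist_eq_norm] using hlip.dist_le_mul (γ u) (γ t)
      _ ≤ L * (G * (u - t)) := by gcongr; exact hγ.norm_sub_le_mul_sub hG ht hu.1
      _ ≤ L * (G * h) := by gcongr; linarith [hu.2]
      _ = L * G * h := by ring
  have := norm_image_sub_le_of_norm_deriv_le_segment' hderiv hbound (t + h)
    (right_mem_Icc.2 (by linarith))
  rw [show γ (t + h) - (t + h - t) • g - (γ t - (t - t) • g) = γ (t + h) - γ t - h • g by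
    simp only [add_sub_cancel_left, sub_self, zero_smul, sub_zero]; abel] at this
  nlinarith

theorem eq_of_gradient_eq_zero (hγ : IsGradFlow f x₀ γ) (hlip : LipschitzWith L (∇ f))
    {t₀ : ℝ} (ht₀ : 0 ≤ t₀) (hcrit : ∇ f (γ t₀) = 0) {t : ℝ} (ht : 0 ≤ t) : γ t = γ t₀ := by
  have hconst (s : ℝ) (S : Set ℝ) :
      HasDerivWithinAt (fun _ => γ t₀) (∇ f ((fun _ => γ t₀) s)) S s := by
    simpa [hcrit] using hasDerivWithinAt_const s S (γ t₀)
  rcases le_total t₀ t with h | h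
  · exact ODE_solution_unique_of_mem_Icc_right (v := fun _ => ∇ f) (s := fun _ => univ)
      (fun _ _ => hlip.lipschitzOnWith) (hγ.continuousOn.mono fun u hu => ht₀.trans hu.1)
      (fun u hu => (hγ.2 u (ht₀.trans hu.1)).mono (Ici_subset_Ici.2 (ht₀.trans hu.1)))
      (fun _ _ => mem_univ _) continuousOn_const (fun u _ => hconst u _) (fun _ _ => mem_univ _)
      rfl ⟨h, le_rfl⟩
  · exact ODE_solution_unique_of_mem_Icc_left (v := fun _ => ∇ f) (s := fun _ => univ)
      (fun _ _ => hlip.lipschitzOnWith) (hγ.continuousOn.mono fun u hu => ht.trans hu.1)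
      (fun u hu => ((hγ.2 u (ht.trans hu.1.le)).hasDerivAt
        (Ici_mem_nhds (ht.trans_lt hu.1))).hasDerivWithinAt)
      (fun _ _ => mem_univ _) continuousOn_const (fun u _ => hconst u _) (fun _ _ => mem_univ _)
      rfl ⟨le_rfl, h⟩

theorem gradient_ne_zero (hγ : IsGradFlow f x₀ γ) (hlip : LipschitzWith L (∇ f)) {p : Euc d}
    (hlim : Tendsto γ atTop (𝓝 p)) (hne : x₀ ≠ p) {t : ℝ} (ht : 0 ≤ t) : ∇ f (γ t) ≠ 0 := by
  intro hcrit
  have hp : γ t = p := tendsto_nhds_unique (tendsto_const_nhds.congr'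
    ((eventually_ge_atTop 0).mono fun s hs => (hγ.eq_of_gradient_eq_zero hlip ht hcrit hs).symm))
    hlim
  exact hne (hγ.1.symm.trans ((hγ.eq_of_gradient_eq_zero hlip ht hcrit le_rfl).trans hp))

theorem exists_pos_le_norm_gradient (hγ : IsGradFlow f x₀ γ) (hcont : Continuous (∇ f)) {T : ℝ}
    (hT : 0 ≤ T) (hne : ∀ t ∈ Icc 0 T, ∇ f (γ t) ≠ 0) :
    ∃ m > 0, ∀ t ∈ Icc 0 T, m ≤ ‖∇ f (γ t)‖ := by
  obtain ⟨t₁, ht₁, hmin⟩ := isCompact_Icc.exists_isMinOn (nonempty_Icc.2 hT)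
    (hcont.comp_continuousOn (hγ.continuousOn.mono fun _ h => h.1)).norm
  exact ⟨_, norm_pos_iff.2 (hne t₁ ht₁), fun t ht => hmin ht⟩

end IsGradFlow

/-- The flow time matched to the `k`-th Max Shift step: a step of length `ε` along the normalized
gradient corresponds to flow time `ε / ‖∇ f‖`. -/
noncomputable def matchedTime {d : ℕ} (f : Euc d → ℝ) (γ : ℝ → Euc d) (ε : ℝ) : ℕ → ℝ
  | 0 => 0
  | k + 1 => matchedTime f γ ε k + ε / ‖∇ f (γ (matchedTime f γ ε k))‖

section MatchedTime

variable {d : ℕ} {f : Euc d → ℝ} {γ : ℝ → Euc d} {ε T G : ℝ}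

theorem monotone_matchedTime (hε : 0 ≤ ε) : Monotone (matchedTime f γ ε) :=
  monotone_nat_of_le_succ fun _ => le_add_of_nonneg_right (by positivity)

theorem matchedTime_nonneg (hε : 0 ≤ ε) (k : ℕ) : 0 ≤ matchedTime f γ ε k :=
  monotone_matchedTime hε k.zero_le

theorem nat_mul_le_mul_matchedTime (hε : 0 ≤ ε) (hG : ∀ z, ‖∇ f z‖ ≤ G)
    (hne : ∀ t ∈ Icc 0 T, ∇ f (γ t) ≠ 0) :
    ∀ k, matchedTime f γ ε k ≤ T → k * ε ≤ G * matchedTime f γ ε k := by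
  intro k hk
  induction k with
  | zero => simp [matchedTime]
  | succ k ih =>
    have hkT : matchedTime f γ ε k ≤ T := (monotone_matchedTime hε k.le_succ).trans hk
    have hpos : 0 < ‖∇ f (γ (matchedTime f γ ε k))‖ :=
      norm_pos_iff.2 (hne _ ⟨matchedTime_nonneg hε k, hkT⟩)
    have : ε ≤ G * (ε / ‖∇ f (γ (matchedTime f γ ε k))‖) := by
      rw [mul_div_assoc', le_div_iff₀ hpos]
      exact mul_le_mul_of_nonneg_left (hG _) hε |>.trans_eq (mul_comm _ _)
    simp only [matchedTime, Nat.cast_succ]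
    nlinarith [ih hkT]

theorem exists_matchedTime_le_lt (hε : 0 < ε) (hT : 0 ≤ T) (hG : ∀ z, ‖∇ f z‖ ≤ G)
    (hne : ∀ t ∈ Icc 0 T, ∇ f (γ t) ≠ 0) :
    ∃ n, matchedTime f γ ε n ≤ T ∧ T < matchedTime f γ ε (n + 1) := by
  classical
  have hex : ∃ k, T < matchedTime f γ ε k := by
    by_contra! hle
    obtain ⟨k, hk⟩ := exists_nat_gt (G * T / ε)
    have := nat_mul_le_mul_matchedTime hε.le hG hne k (hle k)
    have : G * matchedTime f γ ε k ≤ G * T :=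
      mul_le_mul_of_nonneg_left (hle k) ((norm_nonneg _).trans (hG 0))
    rw [div_lt_iff₀ hε] at hk
    linarith
  obtain ⟨n, hn⟩ : ∃ n, Nat.find hex = n + 1 :=
    Nat.exists_eq_succ_of_ne_zero fun h => by
      have := Nat.find_spec hex
      rw [h] at this
      exact hT.not_gt this
  exact ⟨n, not_lt.1 (Nat.find_min hex (by omega)), hn ▸ Nat.find_spec hex⟩

end MatchedTime

namespace IsGradFlow

variable {d : ℕ} {f : Euc d → ℝ} {x₀ : Euc d} {γ : ℝ → Euc d} {L : ℝ≥0} {G : ℝ}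

theorem norm_sub_le_of_isMaxOn (hγ : IsGradFlow f x₀ γ) (hf : Differentiable ℝ f)
    (hlip : LipschitzWith L (∇ f)) (hG : ∀ z, ‖∇ f z‖ ≤ G) {t m ε : ℝ} (ht : 0 ≤ t)
    (hm : 0 < m) (hmt : m ≤ ‖∇ f (γ t)‖) (hε : 0 < ε) (hε1 : ε ≤ 1) {x y : Euc d}
    (hxt : L * ‖x - γ t‖ ≤ m / 2) (hy : y ∈ closedBall x ε)
    (hmax : IsMaxOn f (closedBall x ε) y) :
    ‖y - γ (t + ε / ‖∇ f (γ t)‖)‖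
      ≤ (1 + 2 * L / m * ε) * ‖x - γ t‖ + (√(8 * L / m) + L * G / m ^ 2) * (ε * √ε) := by
  set z := γ t
  set h := ε / ‖∇ f z‖
  have hflow : ‖γ (t + h) - z - h • ∇ f z‖ ≤ L * G / m ^ 2 * (ε * √ε) := by
    have hG0 : 0 ≤ G := (norm_nonneg _).trans (hG 0)
    have hh : h ≤ ε / m := div_le_div_of_nonneg_left hε.le hm hmt
    calc ‖γ (t + h) - z - h • ∇ f z‖ ≤ L * G * h ^ 2 :=
          hγ.norm_sub_sub_smul_le hlip hG ht (by positivity)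
      _ ≤ L * G * (ε / m) ^ 2 := by gcongr
      _ = L * G / m ^ 2 * (ε * ε) := by ring
      _ ≤ L * G / m ^ 2 * (ε * √ε) := by gcongr; exact Real.le_sqrt_self_iff.2 hε1
  have hstep := norm_sub_sub_div_smul_gradient_le hf hlip hm hε hmt hxt hy hmax
  calc ‖y - γ (t + h)‖
      = ‖(y - x - h • ∇ f z) + (x - z) - (γ (t + h) - z - h • ∇ f z)‖ := by congr 1; abel
    _ ≤ ‖y - x - h • ∇ f z‖ + ‖x - z‖ + ‖γ (t + h) - z - h • ∇ f z‖ :=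
        (norm_sub_le _ _).trans (add_le_add_left (norm_add_le _ _) _)
    _ ≤ (1 + 2 * L / m * ε) * ‖x - z‖ + (√(8 * L / m) + L * G / m ^ 2) * (ε * √ε) := by
        linarith

theorem exists_norm_maxShift_sub_le (hγ : IsGradFlow f x₀ γ) (hf : Differentiable ℝ f)
    (hlip : LipschitzWith L (∇ f)) (hG : ∀ z, ‖∇ f z‖ ≤ G) {T m : ℝ} (hm : 0 < m)
    (hmT : ∀ t ∈ Icc 0 T, m ≤ ‖∇ f (γ t)‖) :
    ∃ D, ∀ ε, 0 < ε → ε ≤ 1 → L * (D * √ε) ≤ m / 2 → ∀ x, IsMaxShiftSeq f ε x₀ x →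
      ∀ n, matchedTime f γ ε n ≤ T → ‖x n - γ (matchedTime f γ ε n)‖ ≤ D * √ε := by
  have hG0 : 0 ≤ G := (norm_nonneg _).trans (hG 0)
  have hne (t : ℝ) (ht : t ∈ Icc 0 T) : ∇ f (γ t) ≠ 0 := norm_pos_iff.1 (hm.trans_le (hmT t ht))
  set C := √(8 * L / m) + L * G / m ^ 2
  refine ⟨G * T * C * Real.exp (2 * L / m * (G * T)), fun ε hε hε1 hsmall x hx n hn => ?_⟩
  set t := matchedTime f γ ε
  have htT (k : ℕ) (hk : k ≤ n) : t k ∈ Icc 0 T :=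
    ⟨matchedTime_nonneg hε.le k, (monotone_matchedTime hε.le hk).trans hn⟩
  have hT : 0 ≤ T := (htT 0 n.zero_le).1.trans (htT 0 n.zero_le).2
  have hbound (k : ℕ) (hk : k ≤ n) :
      k * (C * (ε * √ε)) * Real.exp (k * (2 * L / m * ε))
        ≤ G * T * C * Real.exp (2 * L / m * (G * T)) * √ε := by
    have hkε : k * ε ≤ G * T := (nat_mul_le_mul_matchedTime hε.le hG hne k (htT k hk).2).trans
      (mul_le_mul_of_nonneg_left (htT k hk).2 hG0)
    calc k * (C * (ε * √ε)) * Real.exp (k * (2 * L / m * ε))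
        = k * ε * C * √ε * Real.exp (2 * L / m * (k * ε)) := by ring_nf
      _ ≤ G * T * C * √ε * Real.exp (2 * L / m * (G * T)) := by
          have : 0 ≤ G * T * C * √ε := by positivity
          gcongr
      _ = G * T * C * Real.exp (2 * L / m * (G * T)) * √ε := by ring
  refine (discrete_gronwall_bootstrap (e := fun k => ‖x k - γ (t k)‖) (by positivity)
    (by positivity) (by simp [t, matchedTime, hx.1, hγ.1]) (fun k hk hek => ?_) n le_rfl).trans
    (hbound n le_rfl)
  have hxt : L * ‖x k - γ (t k)‖ ≤ m / 2 :=
    (mul_le_mul_of_nonneg_left (hek.trans (hbound k hk.le)) L.coe_nonneg).trans hsmall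
  exact hγ.norm_sub_le_of_isMaxOn hf hlip hG (htT k hk.le).1 hm (hmT _ (htT k hk.le)) hε hε1 hxt
    (hx.2 k).1 (hx.isMaxOn k)

theorem eventually_dist_maxShift_le (hγ : IsGradFlow f x₀ γ) (hf : Differentiable ℝ f)
    (hlip : LipschitzWith L (∇ f)) (hG : ∀ z, ‖∇ f z‖ ≤ G) {T m η : ℝ} (hT : 0 ≤ T)
    (hm : 0 < m) (hmT : ∀ t ∈ Icc 0 T, m ≤ ‖∇ f (γ t)‖) (hη : 0 < η) :
    ∀ᶠ ε in 𝓝[>] 0, ∀ x, IsMaxShiftSeq f ε x₀ x → ∃ K, dist (x K) (γ T) ≤ η := by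
  have hne (t : ℝ) (ht : t ∈ Icc 0 T) : ∇ f (γ t) ≠ 0 := norm_pos_iff.1 (hm.trans_le (hmT t ht))
  obtain ⟨D, hD⟩ := hγ.exists_norm_maxShift_sub_le hf hlip hG hm hmT
  have hsmall : ∀ᶠ ε in 𝓝 (0 : ℝ), L * (D * √ε) < m / 2 ∧ D * √ε + G * ε / m < η := by
    have hcont : Continuous fun ε : ℝ => (L * (D * √ε), D * √ε + G * ε / m) := by fun_prop
    have := hcont.tendsto 0
    simp only [Real.sqrt_zero, mul_zero, zero_div, add_zero] at this
    exact this (prod_mem_nhds (Iio_mem_nhds (half_pos hm)) (Iio_mem_nhds hη))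
  filter_upwards [nhdsWithin_le_nhds hsmall, Ioc_mem_nhdsGT one_pos] with ε hsmallε hε x hx
  obtain ⟨n, hn, hn1⟩ := exists_matchedTime_le_lt hε.1 hT hG hne
  set t := matchedTime f γ ε
  have htn : t n ∈ Icc 0 T := ⟨matchedTime_nonneg hε.1.le n, hn⟩
  have hstep : T - t n ≤ ε / m := by
    have : t (n + 1) = t n + ε / ‖∇ f (γ (t n))‖ := rfl
    linarith [div_le_div_of_nonneg_left hε.1.le hm (hmT _ htn)]
  refine ⟨n, ?_⟩
  calc dist (x n) (γ T) ≤ dist (x n) (γ (t n)) + dist (γ T) (γ (t n)) := dist_triangle_right _ _ _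
    _ ≤ D * √ε + G * (ε / m) := by
        rw [dist_eq_norm, dist_eq_norm]
        have hG0 : 0 ≤ G := (norm_nonneg _).trans (hG 0)
        gcongr
        · exact hD ε hε.1 hε.2 hsmallε.1.le x hx n hn
        · exact (hγ.norm_sub_le_mul_sub hG htn.1 hn).trans (by gcongr)
    _ ≤ η := by rw [mul_div_assoc']; exact hsmallε.2.le

theorem eventually_exists_maxShift_mem {xs : Euc d} {U : Set (Euc d)} (hγ : IsGradFlow f x₀ γ)
    (hf : Differentiable ℝ f) (hlip : LipschitzWith L (∇ f)) (hG : ∀ z, ‖∇ f z‖ ≤ G)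
    (hlim : Tendsto γ atTop (𝓝 xs)) (hne : x₀ ≠ xs) (hU : U ∈ 𝓝 xs) :
    ∀ᶠ ε in 𝓝[>] 0, ∀ x, IsMaxShiftSeq f ε x₀ x → ∃ K, x K ∈ U := by
  obtain ⟨η, hη, hball⟩ := Metric.mem_nhds_iff.1 hU
  obtain ⟨T₀, hT₀⟩ := Metric.tendsto_atTop.1 hlim (η / 2) (half_pos hη)
  set T := max T₀ 0
  obtain ⟨m, hm, hmT⟩ := hγ.exists_pos_le_norm_gradient hlip.continuous (le_max_right T₀ 0)
    fun t ht => hγ.gradient_ne_zero hlip hlim hne ht.1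
  filter_upwards [hγ.eventually_dist_maxShift_le hf hlip hG (le_max_right T₀ 0) hm hmT
    (half_pos hη)] with ε hε x hx
  obtain ⟨K, hK⟩ := hε x hx
  refine ⟨K, hball ?_⟩
  calc dist (x K) xs ≤ dist (x K) (γ T) + dist (γ T) xs := dist_triangle _ _ _
    _ < η / 2 + η / 2 := add_lt_add_of_le_of_lt hK (hT₀ T (le_max_left T₀ 0))
    _ = η := add_halves η

end IsGradFlow

theorem maxShift_consistent_general
    {d : ℕ} (f : Euc d → ℝ) (hf : IsNiceDensity f)
    (xstar : Euc d) (hmode : IsLocalMax f xstar)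
    (x₀ : Euc d) (γ : ℝ → Euc d) (hγ : IsGradFlow f x₀ γ)
    (hbasin : Tendsto γ atTop (𝓝 xstar)) :
    ∃ ε₀ > (0:ℝ), ∀ ε, 0 < ε → ε ≤ ε₀ →
      ∀ x : ℕ → Euc d, IsMaxShiftSeq f ε x₀ x →
        ∃ K : ℕ, ∀ m, K ≤ m → x m = xstar := by
  obtain ⟨-, -, -, hdiff, hgrad, -, ⟨G, hG⟩, ⟨M, hM⟩, -, -, hhess, hmorse⟩ := hf
  obtain ⟨U, hU, hcapture⟩ := hmode.exists_mem_nhds_eventually_maxShift_eq hdiff hgrad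
    hhess.continuous.continuousAt (hmorse xstar hmode.gradient_eq_zero).1
  have hreach : ∀ᶠ ε in 𝓝[>] 0, ∀ x, IsMaxShiftSeq f ε x₀ x → ∃ K, x K ∈ U := by
    rcases eq_or_ne x₀ xstar with rfl | hne
    · exact Eventually.of_forall fun ε x hx => ⟨0, hx.1 ▸ mem_of_mem_nhds hU⟩
    · exact hγ.eventually_exists_maxShift_mem hdiff
        (lipschitzWith_gradient_of_norm_hess_le hgrad hM) hG hbasin hne hU
  obtain ⟨ε₀, hε₀, hsmall⟩ := mem_nhdsGT_iff_exists_Ioc_subset.1 (hreach.and hcapture)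
  refine ⟨ε₀, hε₀, fun ε hε hεε₀ x hx => ?_⟩
  obtain ⟨hreachε, hcaptureε⟩ := hsmall ⟨hε, hεε₀⟩
  obtain ⟨K, hK⟩ := hreachε x hx
  exact hcaptureε x₀ x hx K hK

/-- Max Shift is consistent: started at any point of the basin of attraction
of a mode `x⋆`, for `ε` small enough every Max Shift sequence is eventually constant equal
to `x⋆`. -/
theorem maxShift_consistent
    {d : ℕ} (hd : 0 < d) (f : Euc d → ℝ) (hf : IsNiceDensity f)
    (xstar : Euc d) (hmode : IsLocalMax f xstar)
    (x₀ : Euc d) (γ : ℝ → Euc d) (hγ : IsGradFlow f x₀ γ)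
    (hbasin : Tendsto γ atTop (𝓝 xstar)) :
    ∃ ε₀ > (0:ℝ), ∀ ε, 0 < ε → ε ≤ ε₀ →
      ∀ x : ℕ → Euc d, IsMaxShiftSeq f ε x₀ x →
        ∃ K : ℕ, ∀ m, K ≤ m → x m = xstar :=
  maxShift_consistent_general f hf xstar hmode x₀ γ hγ hbasin
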